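/- arXiv:1008.1837 — 2 statements merged into one kernel-verified Lean document; each statement's English description precedes it below -/
import Mathlib

section
/- Let (G,γ) be a Z²-colored graph with n vertices, c connected components, and Z²-rank k, and let d assign a direction to each edge. The space of collapsed realizations (p,L) — pairs with p: V(G) → R² and L ∈ Mat_{2×2}(R) satisfying p_j + L·γ_{ij} − p_i = 0 for every edge ij — is a linear subspace of R^{2n+4} of dimension at least 4 − 2k + 2c. -/
open Finset

section Defs
variable {V E : Type} [Fintype V] [DecidableEq V] [Fintype E] [DecidableEq E]

/-- Signed incidence of edge `e` at vertex `v`. -/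
def incid (th hd : E → V) (e : E) (v : V) : ℤ :=
  (if hd e = v then 1 else 0) - (if th e = v then 1 else 0)

/-- `x : E → ℤ` is a cycle (1-chain with zero boundary) supported on the edge set `S`. -/
def IsCycle (th hd : E → V) (S : Finset E) (x : E → ℤ) : Prop :=
  (∀ e ∉ S, x e = 0) ∧ ∀ v : V, ∑ e, x e * incid th hd e v = 0

/-- Signed color-sum of a chain. -/
def rho (γ : E → ℤ × ℤ) (x : E → ℤ) : ℤ × ℤ := ∑ e, x e • γ e

def q2 (p : ℤ × ℤ) : ℚ × ℚ := ((p.1 : ℚ), (p.2 : ℚ))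

/-- The ℤ²-rank of the colored subgraph with edge set `S`. -/
noncomputable def zrank (th hd : E → V) (γ : E → ℤ × ℤ) (S : Finset E) : ℕ :=
  Module.finrank ℚ (Submodule.span ℚ (q2 '' (rho γ '' {x | IsCycle th hd S x})))

/-- Adjacency via an edge in `S`. -/
def adjS (th hd : E → V) (S : Finset E) (u v : V) : Prop :=
  ∃ e ∈ S, (th e = u ∧ hd e = v) ∨ (th e = v ∧ hd e = u)

/-- Vertices spanned by the edge set `S`. -/
def verts (th hd : E → V) (S : Finset E) : Finset V := S.image th ∪ S.image hd

/-- Number of connected components of the subgraph induced by the edge set `S`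
(on the vertices it spans). -/
noncomputable def ncomp (th hd : E → V) (S : Finset E) : ℕ :=
  Nat.card (Quotient (Relation.EqvGen.setoid
    (fun a b : {v : V // v ∈ verts th hd S} => adjS th hd S a.1 b.1)))

/-- The subgraph with edge set `S` is connected and spans all vertices. -/
def Conn (th hd : E → V) (S : Finset E) : Prop :=
  ∀ u v : V, Relation.EqvGen (adjS th hd S) u v

/-- The function `f(G') = n' + rk_{ℤ²}(G') − c'`. -/
noncomputable def fZ (th hd : E → V) (γ : E → ℤ × ℤ) (S : Finset E) : ℤ :=
  ((verts th hd S).card : ℤ) + (zrank th hd γ S : ℤ) - (ncomp th hd S : ℤ)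

end Defs

/-- Edge set of the complete multigraph `K_n^{6,4}`. -/
def KE (n : ℕ) : Type :=
  ({p : Fin n × Fin n // p.1 < p.2} × Fin 6) ⊕ (Fin n × Fin 4)

instance (n : ℕ) : Fintype (KE n) := by unfold KE; infer_instance
instance (n : ℕ) : DecidableEq (KE n) := by unfold KE; infer_instance

def Kt (n : ℕ) : KE n → Fin n := Sum.elim (fun q => q.1.1.1) (fun q => q.1)
def Kh (n : ℕ) : KE n → Fin n := Sum.elim (fun q => q.1.1.2) (fun q => q.1)

/-- Multiplication of a 2×2 real matrix with a vector of ℤ², landing in ℝ². -/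
def Lmul (L : Matrix (Fin 2) (Fin 2) ℝ) (g : ℤ × ℤ) : ℝ × ℝ :=
  (L 0 0 * (g.1 : ℝ) + L 0 1 * (g.2 : ℝ), L 1 0 * (g.1 : ℝ) + L 1 1 * (g.2 : ℝ))

/-! Choose in each component a root and, for every vertex `v`, a chain from the root of its
component to `v`; let `σ v ∈ ℤ²` be its color-sum. For each edge `e`, the chain to `th e`, the edge
itself and the reversed chain to `hd e` form a cycle, so `σ (th e) + γ e - σ (hd e)` is a cycle
color-sum. Hence for every matrix `L` killing all cycle color-sums and every `f` constant on
components, `p v = f [v] - L (σ v)` is a collapsed realization, and `(f, L) ↦ (p, L)` is injective.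
The components contribute `2c` dimensions, and the matrices killing a `k`-dimensional space of
cycle color-sums have dimension at least `4 - 2k`. -/

open Module Submodule Matrix

def mulVec₂ : Matrix (Fin 2) (Fin 2) ℝ →ₗ[ℝ] ℝ × ℝ →ₗ[ℝ] ℝ × ℝ :=
  LinearMap.mk₂ ℝ (fun L v => (L 0 0 * v.1 + L 0 1 * v.2, L 1 0 * v.1 + L 1 1 * v.2))
    (fun _ _ _ => by ext <;> simp <;> ring) (fun _ _ _ => by ext <;> simp <;> ring)
    (fun _ _ _ => by ext <;> simp <;> ring) (fun _ _ _ => by ext <;> simp <;> ring)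

def intCast₂ : ℤ × ℤ →+ ℝ × ℝ := (Int.castAddHom ℝ).prodMap (Int.castAddHom ℝ)

noncomputable def ratCast₂ : ℚ × ℚ →ₗ[ℚ] ℝ × ℝ :=
  (Algebra.linearMap ℚ ℝ).prodMap (Algebra.linearMap ℚ ℝ)

lemma ratCast₂_q2 (g : ℤ × ℤ) : ratCast₂ (q2 g) = intCast₂ g := by
  ext <;> simp [ratCast₂, intCast₂, q2]

lemma Lmul_eq_mulVec₂ (L : Matrix (Fin 2) (Fin 2) ℝ) (g : ℤ × ℤ) :
    Lmul L g = mulVec₂ L (intCast₂ g) := rfl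

def annihMatrices (Γ : Set (ℤ × ℤ)) : Submodule ℝ (Matrix (Fin 2) (Fin 2) ℝ) :=
  ⨅ g ∈ Γ, LinearMap.ker (mulVec₂.flip (intCast₂ g))

lemma mem_annihMatrices {Γ : Set (ℤ × ℤ)} {L : Matrix (Fin 2) (Fin 2) ℝ} :
    L ∈ annihMatrices Γ ↔ ∀ g ∈ Γ, Lmul L g = 0 := by
  simp [annihMatrices, mem_iInf, Lmul_eq_mulVec₂]

lemma four_sub_two_mul_finrank_span_le_finrank_annihMatrices (Γ : Set (ℤ × ℤ)) :
    4 - 2 * (finrank ℚ (span ℚ (q2 '' Γ)) : ℤ) ≤ finrank ℝ (annihMatrices Γ) := by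
  set S := span ℚ (q2 '' Γ)
  let b := Module.finBasis ℚ S
  let T : Matrix (Fin 2) (Fin 2) ℝ →ₗ[ℝ] Fin (finrank ℚ S) → ℝ × ℝ :=
    LinearMap.pi fun i => mulVec₂.flip (ratCast₂ (b i))
  have hker : LinearMap.ker T ≤ annihMatrices Γ := by
    intro L hL
    have hzero : (mulVec₂ L).restrictScalars ℚ ∘ₗ ratCast₂ ∘ₗ S.subtype = 0 :=
      b.ext fun i => congrFun (LinearMap.mem_ker.mp hL) i
    refine mem_annihMatrices.mpr fun g hg => ?_
    have := LinearMap.congr_fun hzero ⟨q2 g, subset_span ⟨g, hg, rfl⟩⟩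
    simpa [Lmul_eq_mulVec₂, ratCast₂_q2] using this
  have hrange : finrank ℝ (LinearMap.range T) ≤ 2 * finrank ℚ S :=
    (finrank_le _).trans (by rw [finrank_pi_fintype]; simp [mul_comm])
  have hsum := T.finrank_range_add_finrank_ker
  have hmono := finrank_mono hker
  simp only [finrank_matrix, Fintype.card_fin, finrank_self] at hsum
  omega

section Chains

variable {V E : Type} [DecidableEq V] [Fintype E]

lemma isCycle_iff_vecMul (th hd : E → V) (S : Finset E) (x : E → ℤ) :
    IsCycle th hd S x ↔ (∀ e ∉ S, x e = 0) ∧ x ᵥ* of (incid th hd) = 0 := by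
  simp only [IsCycle, funext_iff, vecMul, dotProduct, of_apply, Pi.zero_apply]

lemma rho_eq_linearCombination (γ : E → ℤ × ℤ) (x : E → ℤ) :
    rho γ x = Fintype.linearCombination ℤ γ x := by
  rw [Fintype.linearCombination_apply, rho]

lemma single_one_vecMul_incid [DecidableEq E] (th hd : E → V) (e : E) :
    Pi.single e 1 ᵥ* of (incid th hd) = Pi.single (hd e) 1 - Pi.single (th e) 1 := by
  ext w
  simp [incid, Pi.single_apply, eq_comm]

lemma exists_chain_of_eqvGen (th hd : E → V) {S : Finset E} {u v : V}
    (h : Relation.EqvGen (adjS th hd S) u v) :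
    ∃ x : E → ℤ, (∀ e ∉ S, x e = 0) ∧
      x ᵥ* of (incid th hd) = Pi.single v 1 - Pi.single u 1 := by
  classical
  induction h with
  | rel a b hab =>
    obtain ⟨e, heS, ⟨rfl, rfl⟩ | ⟨rfl, rfl⟩⟩ := hab
    · refine ⟨Pi.single e 1, fun e' he' => ?_, ?_⟩
      · exact Pi.single_eq_of_ne (ne_of_mem_of_not_mem heS he').symm _
      · exact single_one_vecMul_incid th hd e
    · refine ⟨-Pi.single e 1, fun e' he' => ?_, ?_⟩
      · simp [Pi.single_eq_of_ne (ne_of_mem_of_not_mem heS he').symm]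
      · rw [neg_vecMul, single_one_vecMul_incid, neg_sub]
  | refl a => exact ⟨0, fun _ _ => rfl, by simp⟩
  | symm a b _ ih =>
    obtain ⟨x, hxS, hx⟩ := ih
    exact ⟨-x, fun e he => by simp [hxS e he], by rw [neg_vecMul, hx, neg_sub]⟩
  | trans a b c _ _ ih₁ ih₂ =>
    obtain ⟨x, hxS, hx⟩ := ih₁
    obtain ⟨y, hyS, hy⟩ := ih₂
    exact ⟨x + y, fun e he => by simp [hxS e he, hyS e he], by
      rw [add_vecMul, hx, hy, sub_add_sub_cancel']⟩

def cycleColorSums (th hd : E → V) (γ : E → ℤ × ℤ) : Set (ℤ × ℤ) :=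
  rho γ '' {x | IsCycle th hd univ x}

lemma zrank_univ (th hd : E → V) (γ : E → ℤ × ℤ) :
    zrank th hd γ univ = finrank ℚ (span ℚ (q2 '' cycleColorSums th hd γ)) :=
  rfl

lemma exists_potential (th hd : E → V) (γ : E → ℤ × ℤ) :
    ∃ σ : V → ℤ × ℤ, ∀ e, σ (th e) + γ e - σ (hd e) ∈ cycleColorSums th hd γ := by
  classical
  let s := Relation.EqvGen.setoid (adjS th hd (univ : Finset E))
  have hout (v : V) : Relation.EqvGen (adjS th hd univ) (Quotient.mk s v).out v :=
    Quotient.exact (Quotient.out_eq (Quotient.mk s v))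
  choose ch _ hch using fun v => exists_chain_of_eqvGen th hd (hout v)
  refine ⟨fun v => rho γ (ch v), fun e => ⟨ch (th e) + Pi.single e 1 - ch (hd e), ?_, ?_⟩⟩
  · have hsame : (Quotient.mk s (th e)).out = (Quotient.mk s (hd e)).out :=
      congrArg Quotient.out
        (Quotient.sound (Relation.EqvGen.rel _ _ ⟨e, mem_univ e, Or.inl ⟨rfl, rfl⟩⟩))
    rw [Set.mem_ofPred_eq, isCycle_iff_vecMul]
    refine ⟨fun e he => absurd (mem_univ e) he, ?_⟩
    rw [sub_vecMul, add_vecMul, hch, hch, single_one_vecMul_incid, hsame]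
    abel
  · simp only [rho_eq_linearCombination, map_add, map_sub,
      Fintype.linearCombination_apply_single, one_smul]

end Chains

section Realizations

variable {V E : Type}

def collapsedRealizations (th hd : E → V) (γ : E → ℤ × ℤ) :
    Submodule ℝ ((V → ℝ × ℝ) × Matrix (Fin 2) (Fin 2) ℝ) :=
  LinearMap.ker (LinearMap.pi fun e =>
    LinearMap.proj (R := ℝ) (φ := fun _ : V => ℝ × ℝ) (hd e) ∘ₗ LinearMap.fst ℝ _ _
      + mulVec₂.flip (intCast₂ (γ e)) ∘ₗ LinearMap.snd ℝ _ _
      - LinearMap.proj (R := ℝ) (φ := fun _ : V => ℝ × ℝ) (th e) ∘ₗ LinearMap.fst ℝ _ _)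

lemma mem_collapsedRealizations {th hd : E → V} {γ : E → ℤ × ℤ}
    {pL : (V → ℝ × ℝ) × Matrix (Fin 2) (Fin 2) ℝ} :
    pL ∈ collapsedRealizations th hd γ ↔ ∀ e, pL.1 (hd e) + Lmul pL.2 (γ e) = pL.1 (th e) := by
  simp [collapsedRealizations, funext_iff, sub_eq_zero, Lmul_eq_mulVec₂]

def realizationOfPotential (s : Setoid V) (σ : V → ℤ × ℤ) :
    ((Quotient s → ℝ × ℝ) × Matrix (Fin 2) (Fin 2) ℝ) →ₗ[ℝ]
      (V → ℝ × ℝ) × Matrix (Fin 2) (Fin 2) ℝ :=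
  (LinearMap.funLeft ℝ (ℝ × ℝ) (Quotient.mk s) ∘ₗ LinearMap.fst ℝ _ _
    - LinearMap.pi (fun v => mulVec₂.flip (intCast₂ (σ v))) ∘ₗ LinearMap.snd ℝ _ _).prod
    (LinearMap.snd ℝ _ _)

lemma realizationOfPotential_apply (s : Setoid V) (σ : V → ℤ × ℤ)
    (fL : (Quotient s → ℝ × ℝ) × Matrix (Fin 2) (Fin 2) ℝ) :
    realizationOfPotential s σ fL = (fun v => fL.1 (Quotient.mk s v) - Lmul fL.2 (σ v), fL.2) :=
  rfl

lemma realizationOfPotential_injective (s : Setoid V) (σ : V → ℤ × ℤ) :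
    Function.Injective (realizationOfPotential s σ) := by
  rw [← LinearMap.ker_eq_bot, LinearMap.ker_eq_bot']
  rintro ⟨f, L⟩ h
  simp only [realizationOfPotential_apply, Prod.mk_eq_zero] at h
  obtain ⟨hf, rfl⟩ := h
  have hf' : (fun v => f (Quotient.mk s v)) = 0 := by
    simpa [Lmul_eq_mulVec₂] using hf
  refine Prod.ext ?_ rfl
  exact LinearMap.funLeft_injective_of_surjective ℝ (ℝ × ℝ) _ Quotient.mk_surjective
    (hf'.trans (map_zero _).symm)

lemma realizationOfPotential_mem_collapsedRealizations [DecidableEq V] [Fintype E]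
    {th hd : E → V} {γ : E → ℤ × ℤ} {σ : V → ℤ × ℤ}
    (hσ : ∀ e, σ (th e) + γ e - σ (hd e) ∈ cycleColorSums th hd γ)
    (f : Quotient (Relation.EqvGen.setoid (adjS th hd univ)) → ℝ × ℝ)
    {L : Matrix (Fin 2) (Fin 2) ℝ} (hL : L ∈ annihMatrices (cycleColorSums th hd γ)) :
    realizationOfPotential _ σ (f, L) ∈ collapsedRealizations th hd γ := by
  refine mem_collapsedRealizations.mpr fun e => ?_
  have hkill := mem_annihMatrices.mp hL _ (hσ e)
  have hcomp : (Quotient.mk _ (th e) : Quotient (Relation.EqvGen.setoid (adjS th hd univ))) =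
      Quotient.mk _ (hd e) :=
    Quotient.sound (Relation.EqvGen.rel _ _ ⟨e, mem_univ e, Or.inl ⟨rfl, rfl⟩⟩)
  simp only [Lmul_eq_mulVec₂, map_add, map_sub] at hkill
  simp only [realizationOfPotential_apply, Lmul_eq_mulVec₂, hcomp]
  linear_combination hkill

theorem two_mul_card_add_finrank_annihMatrices_le [Fintype V] [DecidableEq V] [Fintype E]
    (th hd : E → V) (γ : E → ℤ × ℤ) :
    2 * Nat.card (Quotient (Relation.EqvGen.setoid (adjS th hd univ)))
      + finrank ℝ (annihMatrices (cycleColorSums th hd γ))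
      ≤ finrank ℝ (collapsedRealizations th hd γ) := by
  obtain ⟨σ, hσ⟩ := exists_potential th hd γ
  set s := Relation.EqvGen.setoid (adjS th hd (univ : Finset E))
  set A := annihMatrices (cycleColorSums th hd γ)
  let Ψ := realizationOfPotential s σ ∘ₗ LinearMap.prodMap LinearMap.id A.subtype
  have hinj : Function.Injective Ψ :=
    (realizationOfPotential_injective s σ).comp
      (Prod.map_injective.mpr ⟨Function.injective_id, Subtype.val_injective⟩)
  have hrange : LinearMap.range Ψ ≤ collapsedRealizations th hd γ := by
    rintro _ ⟨⟨f, L⟩, rfl⟩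
    exact realizationOfPotential_mem_collapsedRealizations hσ f L.2
  have : Fintype (Quotient s) := Fintype.ofFinite _
  calc 2 * Nat.card (Quotient s) + finrank ℝ A = finrank ℝ ((Quotient s → ℝ × ℝ) × A) := by
        simp [finrank_pi_fintype, Nat.card_eq_fintype_card, mul_comm]
    _ = finrank ℝ (LinearMap.range Ψ) := (LinearMap.finrank_range_of_inj hinj).symm
    _ ≤ finrank ℝ (collapsedRealizations th hd γ) := finrank_mono hrange

end Realizations

theorem statement17_general {V E : Type} [Fintype V] [DecidableEq V] [Fintype E]
    (th hd : E → V) (γ : E → ℤ × ℤ) (k c : ℕ)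
    (hk : zrank th hd γ Finset.univ = k)
    (hc : Nat.card (Quotient (Relation.EqvGen.setoid
        (adjS th hd (Finset.univ : Finset E)))) = c) :
    ∃ W : Submodule ℝ ((V → ℝ × ℝ) × Matrix (Fin 2) (Fin 2) ℝ),
      (∀ pL : (V → ℝ × ℝ) × Matrix (Fin 2) (Fin 2) ℝ,
        pL ∈ W ↔ ∀ e : E, pL.1 (hd e) + Lmul pL.2 (γ e) = pL.1 (th e)) ∧
      (4 - 2 * (k : ℤ) + 2 * (c : ℤ) ≤ (Module.finrank ℝ W : ℤ)) := by
  refine ⟨collapsedRealizations th hd γ, fun _ => mem_collapsedRealizations, ?_⟩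
  have hannih := four_sub_two_mul_finrank_span_le_finrank_annihMatrices (cycleColorSums th hd γ)
  have hcount := two_mul_card_add_finrank_annihMatrices_le th hd γ
  rw [← zrank_univ, hk] at hannih
  rw [hc] at hcount
  omega

/-- For a colored graph with ℤ²-rank `k` and `c` connected components, the set of collapsed
realizations `(p, L)` (satisfying `p_j + L·γ_{ij} = p_i` for every edge `ij`) is a linear
subspace of `(ℝ²)^V × Mat₂ₓ₂(ℝ) ≅ ℝ^{2n+4}` of dimension at least `4 − 2k + 2c`. -/
theorem statement17 {V E : Type} [Fintype V] [DecidableEq V] [Fintype E] [DecidableEq E]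
    (th hd : E → V) (γ : E → ℤ × ℤ) (d : E → ℝ × ℝ) (k c : ℕ)
    (hk : zrank th hd γ Finset.univ = k)
    (hc : Nat.card (Quotient (Relation.EqvGen.setoid
        (adjS th hd (Finset.univ : Finset E)))) = c) :
    ∃ W : Submodule ℝ ((V → ℝ × ℝ) × Matrix (Fin 2) (Fin 2) ℝ),
      (∀ pL : (V → ℝ × ℝ) × Matrix (Fin 2) (Fin 2) ℝ,
        pL ∈ W ↔ ∀ e : E, pL.1 (hd e) + Lmul pL.2 (γ e) = pL.1 (th e)) ∧
      (4 - 2 * (k : ℤ) + 2 * (c : ℤ) ≤ (Module.finrank ℝ W : ℤ)) :=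
  statement17_general th hd γ k c hk hc
end

section
/- Let (G,γ) be a colored-Laman graph (n vertices, 2n+1 edges, satisfying m' ≤ 2n' − 3 + 2·rk_{Z²} − 2(c'−1) on all edge-induced subgraphs). Then a realization (p, L) of any colored direction network on (G,γ) is collapsed (every edge ij satisfies p_j + L·γ_{ij} = p_i) if and only if L is the zero matrix and all points p_i coincide. In particular, the space of collapsed realizations is exactly 2-dimensional. -/
open Finset

/-!
Since `E` has `2n + 1` edges, the colored-Laman count for the whole edge set can only hold if it
is tight term by term: the graph spans every vertex, is connected, and has `ℤ²`-rank `2`.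
Summing the collapse relations `p_j + L γ_{ij} = p_i` around a cycle `C` telescopes to
`L ρ(C) = 0`; since the color-sums of cycles span `ℚ²`, this forces `L = 0`, after which the
collapse relations say that `p` is constant along edges, hence constant by connectivity.
-/

section LinearAlgebra

lemma Lmul_add (L : Matrix (Fin 2) (Fin 2) ℝ) (g h : ℤ × ℤ) :
    Lmul L (g + h) = Lmul L g + Lmul L h := by
  simp only [Lmul, Prod.mk_add_mk, Prod.fst_add, Prod.snd_add, Prod.mk.injEq]
  constructor <;> push_cast <;> ring

lemma Lmul_zero_left (g : ℤ × ℤ) : Lmul 0 g = 0 := by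
  simp [Lmul, Prod.ext_iff]

def LmulAddHom (L : Matrix (Fin 2) (Fin 2) ℝ) : (ℤ × ℤ) →+ ℝ × ℝ :=
  AddMonoidHom.mk' (Lmul L) (Lmul_add L)

def LmulRat (L : Matrix (Fin 2) (Fin 2) ℝ) : (ℚ × ℚ) →ₗ[ℚ] ℝ × ℝ where
  toFun y := (L 0 0 * (y.1 : ℝ) + L 0 1 * (y.2 : ℝ), L 1 0 * (y.1 : ℝ) + L 1 1 * (y.2 : ℝ))
  map_add' a b := by
    simp only [Prod.fst_add, Prod.snd_add, Prod.mk_add_mk, Prod.mk.injEq]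
    constructor <;> push_cast <;> ring
  map_smul' c a := by
    simp only [Prod.smul_fst, Prod.smul_snd, smul_eq_mul, RingHom.id_apply,
      Prod.smul_mk, Rat.smul_def, Prod.mk.injEq]
    constructor <;> push_cast <;> ring

lemma LmulRat_q2 (L : Matrix (Fin 2) (Fin 2) ℝ) (r : ℤ × ℤ) : LmulRat L (q2 r) = Lmul L r := by
  simp only [LmulRat, q2, LinearMap.coe_mk, AddHom.coe_mk, Lmul, Prod.mk.injEq]
  constructor <;> push_cast <;> ring

lemma eq_zero_of_Lmul_eq_zero_of_span_eq_top {L : Matrix (Fin 2) (Fin 2) ℝ} {A : Set (ℤ × ℤ)}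
    (hA : Submodule.span ℚ (q2 '' A) = ⊤) (hL : ∀ r ∈ A, Lmul L r = 0) : L = 0 := by
  have hker : ∀ y : ℚ × ℚ, LmulRat L y = 0 := by
    have : Submodule.span ℚ (q2 '' A) ≤ LinearMap.ker (LmulRat L) := by
      rw [Submodule.span_le]
      rintro _ ⟨r, hr, rfl⟩
      rw [SetLike.mem_coe, LinearMap.mem_ker, LmulRat_q2]
      exact hL r hr
    intro y
    exact this (hA ▸ Submodule.mem_top)
  have h10 := hker (1, 0)
  have h01 := hker (0, 1)
  simp only [LmulRat, LinearMap.coe_mk, AddHom.coe_mk, Rat.cast_one, Rat.cast_zero,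
    mul_one, mul_zero, add_zero, zero_add, Prod.mk_eq_zero] at h10 h01
  ext i j
  fin_cases i <;> fin_cases j <;> simp [h10.1, h10.2, h01.1, h01.2]

end LinearAlgebra

section Graph

variable {V E : Type}

lemma sum_incid_smul [Fintype V] [DecidableEq V] {M : Type*} [AddCommGroup M]
    (th hd : E → V) (e : E) (p : V → M) :
    ∑ v, incid th hd e v • p v = p (hd e) - p (th e) := by
  simp [incid, sub_smul, Finset.sum_sub_distrib, ite_smul]

lemma sum_smul_sub_eq_sum_boundary_smul [Fintype V] [DecidableEq V] [Fintype E]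
    {M : Type*} [AddCommGroup M] (th hd : E → V) (x : E → ℤ) (p : V → M) :
    ∑ e, x e • (p (hd e) - p (th e)) = ∑ v, (∑ e, x e * incid th hd e v) • p v := by
  simp_rw [← sum_incid_smul th hd, Finset.smul_sum, Finset.sum_smul, mul_smul]
  exact Finset.sum_comm

lemma Lmul_rho_eq_zero_of_collapsed [Fintype V] [DecidableEq V] [Fintype E]
    {th hd : E → V} {γ : E → ℤ × ℤ} {p : V → ℝ × ℝ} {L : Matrix (Fin 2) (Fin 2) ℝ}
    (hc : ∀ e, p (hd e) + Lmul L (γ e) = p (th e)) {S : Finset E} {x : E → ℤ}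
    (hx : IsCycle th hd S x) :
    Lmul L (rho γ x) = 0 := by
  have hγ : ∀ e, Lmul L (γ e) = -(p (hd e) - p (th e)) := fun e => by
    rw [← hc e]; abel
  calc Lmul L (rho γ x) = LmulAddHom L (∑ e, x e • γ e) := rfl
    _ = ∑ e, x e • Lmul L (γ e) := by simp only [map_sum, map_zsmul]; rfl
    _ = -∑ v, (∑ e, x e * incid th hd e v) • p v := by
        simp_rw [hγ, smul_neg, Finset.sum_neg_distrib, sum_smul_sub_eq_sum_boundary_smul]
    _ = 0 := by simp [hx.2]

lemma Conn.apply_eq {α : Type*} {th hd : E → V} {S : Finset E} (hS : Conn th hd S)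
    {p : V → α} (hp : ∀ e ∈ S, p (hd e) = p (th e)) (u v : V) : p u = p v := by
  refine (eq_equivalence.comap p).eqvGen_iff.mp (Relation.EqvGen.mono ?_ u v (hS u v))
  rintro a b ⟨e, he, ⟨rfl, rfl⟩ | ⟨rfl, rfl⟩⟩
  exacts [(hp e he).symm, hp e he]

lemma conn_of_ncomp_eq_one [Fintype V] [DecidableEq V] {th hd : E → V} {S : Finset E}
    (hV : verts th hd S = univ) (hc : ncomp th hd S = 1) : Conn th hd S := by
  intro u v
  have hu : u ∈ verts th hd S := hV ▸ mem_univ u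
  have hv : v ∈ verts th hd S := hV ▸ mem_univ v
  have hsub := (Nat.card_eq_one_iff_unique.mp hc).1
  exact ((Relation.EqvGen.is_equivalence _).comap Subtype.val).eqvGen_iff.mp
    (Relation.EqvGen.mono (fun _ _ h => .rel _ _ h) _ _
      (Quotient.exact (hsub.allEq ⟦⟨u, hu⟩⟧ ⟦⟨v, hv⟩⟧)))

lemma zrank_le_two [Fintype V] [DecidableEq V] [Fintype E]
    (th hd : E → V) (γ : E → ℤ × ℤ) (S : Finset E) : zrank th hd γ S ≤ 2 :=
  (Submodule.finrank_le _).trans (by simp)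

lemma one_le_ncomp [DecidableEq V] {th hd : E → V} {S : Finset E} (hS : S.Nonempty) :
    1 ≤ ncomp th hd S := by
  obtain ⟨e, he⟩ := hS
  have hmem : th e ∈ verts th hd S := mem_union_left _ (mem_image_of_mem th he)
  exact Nat.one_le_iff_ne_zero.mpr (Nat.card_ne_zero.mpr ⟨⟨⟦⟨th e, hmem⟩⟧⟩, inferInstance⟩)

lemma span_rho_eq_top_of_zrank_eq_two [Fintype V] [DecidableEq V] [Fintype E]
    {th hd : E → V} {γ : E → ℤ × ℤ} {S : Finset E} (hz : zrank th hd γ S = 2) :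
    Submodule.span ℚ (q2 '' (rho γ '' {x | IsCycle th hd S x})) = ⊤ :=
  Submodule.eq_top_of_finrank_eq (by rw [Module.finrank_prod, Module.finrank_self]; exact hz)

lemma verts_eq_univ_and_zrank_eq_two_and_ncomp_eq_one [Fintype V] [DecidableEq V] [Fintype E]
    [Nonempty E] {th hd : E → V} {γ : E → ℤ × ℤ}
    (hm : (Fintype.card E : ℤ) = 2 * Fintype.card V + 1)
    (hlam : ((univ : Finset E).card : ℤ) ≤ 2 * ((verts th hd univ).card : ℤ) - 3
      + 2 * (zrank th hd γ univ : ℤ) - 2 * ((ncomp th hd univ : ℤ) - 1)) :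
    verts th hd univ = univ ∧ zrank th hd γ univ = 2 ∧ ncomp th hd univ = 1 := by
  have hz := zrank_le_two th hd γ univ
  have hc : 1 ≤ ncomp th hd (univ : Finset E) := one_le_ncomp univ_nonempty
  have hv := card_le_univ (verts th hd (univ : Finset E))
  rw [card_univ] at hlam
  exact ⟨eq_univ_of_card _ (by omega), by omega, by omega⟩

lemma collapsed_iff [Fintype V] [DecidableEq V] [Fintype E] {th hd : E → V} {γ : E → ℤ × ℤ}
    (hconn : Conn th hd univ) (hz : zrank th hd γ univ = 2)
    (p : V → ℝ × ℝ) (L : Matrix (Fin 2) (Fin 2) ℝ) :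
    (∀ e, p (hd e) + Lmul L (γ e) = p (th e)) ↔ L = 0 ∧ ∀ i j, p i = p j := by
  constructor
  · intro hc
    have hL : L = 0 := eq_zero_of_Lmul_eq_zero_of_span_eq_top
      (span_rho_eq_top_of_zrank_eq_two hz)
      (by rintro _ ⟨x, hx, rfl⟩; exact Lmul_rho_eq_zero_of_collapsed hc hx)
    refine ⟨hL, hconn.apply_eq fun e _ => ?_⟩
    simpa [hL, Lmul_zero_left] using hc e
  · rintro ⟨rfl, hp⟩ e
    rw [Lmul_zero_left, add_zero]
    exact hp _ _

end Graph

section ConstantRealizations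

variable (V : Type)

def constRealization : (ℝ × ℝ) →ₗ[ℝ] (V → ℝ × ℝ) × Matrix (Fin 2) (Fin 2) ℝ :=
  LinearMap.inl ℝ _ _ ∘ₗ LinearMap.const

variable {V}

lemma mem_range_constRealization_iff [Nonempty V]
    (pL : (V → ℝ × ℝ) × Matrix (Fin 2) (Fin 2) ℝ) :
    pL ∈ LinearMap.range (constRealization V) ↔ pL.2 = 0 ∧ ∀ i j, pL.1 i = pL.1 j := by
  constructor
  · rintro ⟨c, rfl⟩
    exact ⟨rfl, fun _ _ => rfl⟩
  · rintro ⟨hL, hp⟩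
    obtain ⟨v⟩ := ‹Nonempty V›
    exact ⟨pL.1 v, Prod.ext (funext (hp v)) hL.symm⟩

lemma finrank_range_constRealization [Nonempty V] :
    Module.finrank ℝ (LinearMap.range (constRealization V)) = 2 := by
  have hinj : Function.Injective (constRealization V) := fun a b hab => by
    obtain ⟨v⟩ := ‹Nonempty V›
    exact congrFun (congrArg Prod.fst hab) v
  rw [LinearMap.finrank_range_of_inj hinj]
  simp

end ConstantRealizations

theorem statement18_general {V E : Type} [Fintype V] [DecidableEq V] [Fintype E]
    (th hd : E → V) (γ : E → ℤ × ℤ)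
    (hm : (Fintype.card E : ℤ) = 2 * Fintype.card V + 1)
    (hlam : ∀ S : Finset E, S.Nonempty →
      (S.card : ℤ) ≤ 2 * ((verts th hd S).card : ℤ) - 3 + 2 * (zrank th hd γ S : ℤ)
        - 2 * ((ncomp th hd S : ℤ) - 1)) :
    (∀ (p : V → ℝ × ℝ) (L : Matrix (Fin 2) (Fin 2) ℝ),
      (∀ e : E, p (hd e) + Lmul L (γ e) = p (th e)) ↔
        (L = 0 ∧ ∀ i j : V, p i = p j)) ∧
    (∃ W : Submodule ℝ ((V → ℝ × ℝ) × Matrix (Fin 2) (Fin 2) ℝ),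
      (∀ pL : (V → ℝ × ℝ) × Matrix (Fin 2) (Fin 2) ℝ,
        pL ∈ W ↔ ∀ e : E, pL.1 (hd e) + Lmul pL.2 (γ e) = pL.1 (th e)) ∧
      Module.finrank ℝ W = 2) := by
  have : Nonempty E := Fintype.card_pos_iff.mp (by omega)
  have : Nonempty V := this.map th
  obtain ⟨hV, hz, hc⟩ :=
    verts_eq_univ_and_zrank_eq_two_and_ncomp_eq_one hm (hlam univ univ_nonempty)
  have hcollapsed := collapsed_iff (conn_of_ncomp_eq_one hV hc) hz
  refine ⟨hcollapsed, LinearMap.range (constRealization V), fun pL => ?_,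
    finrank_range_constRealization⟩
  rw [mem_range_constRealization_iff, hcollapsed]

/-- For a colored-Laman graph, a realization `(p, L)` of any direction network is collapsed
(every edge satisfies `p_j + L·γ_{ij} = p_i`) iff `L = 0` and all points coincide; in
particular the space of collapsed realizations is exactly 2-dimensional. -/
theorem statement18 {V E : Type} [Fintype V] [DecidableEq V] [Fintype E] [DecidableEq E]
    (th hd : E → V) (γ : E → ℤ × ℤ)
    (hm : (Fintype.card E : ℤ) = 2 * Fintype.card V + 1)
    (hlam : ∀ S : Finset E, S.Nonempty →
      (S.card : ℤ) ≤ 2 * ((verts th hd S).card : ℤ) - 3 + 2 * (zrank th hd γ S : ℤ)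
        - 2 * ((ncomp th hd S : ℤ) - 1)) :
    (∀ (p : V → ℝ × ℝ) (L : Matrix (Fin 2) (Fin 2) ℝ),
      (∀ e : E, p (hd e) + Lmul L (γ e) = p (th e)) ↔
        (L = 0 ∧ ∀ i j : V, p i = p j)) ∧
    (∃ W : Submodule ℝ ((V → ℝ × ℝ) × Matrix (Fin 2) (Fin 2) ℝ),
      (∀ pL : (V → ℝ × ℝ) × Matrix (Fin 2) (Fin 2) ℝ,
        pL ∈ W ↔ ∀ e : E, pL.1 (hd e) + Lmul pL.2 (γ e) = pL.1 (th e)) ∧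
      Module.finrank ℝ W = 2) :=
  statement18_general th hd γ hm hlam
end
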